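/- Let m be any positive integer, let l(m) = ⌈log₂ m⌉ + 1, w(m) = 𝟙[m > 1]·⌈3m/2⌉, and let r be the sequence with r(1) = 0, r(k) = 3k/2 + r(k/2) for k even, and r(k) = 2 + 3(k−1)/2 + r((k+1)/2) for odd k ≠ 1. Then for any m scalar-valued affine functions f₁, …, f_m : ℝⁿ → ℝ there exists an l(m)-layer ReLU network g : ℝⁿ → ℝ with r(m) hidden neurons and a maximum width of w(m) such that g(x) = max_{i∈[m]} f_i(x) for all x ∈ ℝⁿ, and likewise there exists such a network with g(x) = min_{i∈[m]} f_i(x) for all x ∈ ℝⁿ. -/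

import Mathlib

noncomputable section

/-- The ReLU activation function. -/
def relu (x : ℝ) : ℝ := max 0 x

/-- A ReLU network with `hidden` hidden layers (i.e. `hidden + 1` layers in total),
layer dimensions `k 0, k 1, …, k (hidden + 1)`, weight matrices `W i` and biases `b i`. -/
structure ReLUNet where
  hidden : ℕ
  k : ℕ → ℕ
  W : (i : ℕ) → Matrix (Fin (k (i + 1))) (Fin (k i)) ℝ
  b : (i : ℕ) → Fin (k (i + 1)) → ℝ

namespace ReLUNet

/-- The output of the `(i+1)`-st affine layer: `h 1 (x) = W 1 x + b 1` and
`h (i+1) (x) = W (i+1) σ (h i (x)) + b (i+1)`. -/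
def layerOut (N : ReLUNet) : (i : ℕ) → (Fin (N.k 0) → ℝ) → Fin (N.k (i + 1)) → ℝ
  | 0, x => (N.W 0).mulVec x + N.b 0
  | i + 1, x => (N.W (i + 1)).mulVec (fun j => relu (N.layerOut i x j)) + N.b (i + 1)

/-- The input-output function of the network. -/
def eval (N : ReLUNet) : (Fin (N.k 0) → ℝ) → Fin (N.k (N.hidden + 1)) → ℝ :=
  N.layerOut N.hidden

/-- The number of layers of the network. -/
def depth (N : ReLUNet) : ℕ := N.hidden + 1

/-- The number of hidden neurons of the network. -/
def numHiddenNeurons (N : ReLUNet) : ℕ := ∑ i ∈ Finset.Icc 1 N.hidden, N.k i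

/-- The maximum width (maximum number of neurons over all hidden layers; `0` if none). -/
def maxWidth (N : ReLUNet) : ℕ := (Finset.Icc 1 N.hidden).sup N.k

/-- The network `N` exactly represents the function `f : ℝⁿ → ℝᵐ`. -/
def Computes (N : ReLUNet) {n m : ℕ} (f : (Fin n → ℝ) → Fin m → ℝ) : Prop :=
  ∃ (h0 : N.k 0 = n) (h1 : N.k (N.hidden + 1) = m),
    ∀ (x : Fin n → ℝ) (j : Fin (N.k (N.hidden + 1))),
      N.eval (fun i => x (Fin.cast h0 i)) j = f x (Fin.cast h1 j)

/-- The network `N` exactly represents the scalar-valued function `f : ℝⁿ → ℝ`. -/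
def ComputesScalar (N : ReLUNet) {n : ℕ} (f : (Fin n → ℝ) → ℝ) : Prop :=
  N.Computes fun x (_ : Fin 1) => f x

end ReLUNet

/-- `f : ℝⁿ → ℝ` is an affine function. -/
def IsAffineFn {n : ℕ} (f : (Fin n → ℝ) → ℝ) : Prop :=
  ∃ (a : Fin n → ℝ) (c : ℝ), ∀ x, f x = (∑ i, a i * x i) + c

/-- `p` agrees with some affine function on the set `X`. -/
def AffineOnSet {n : ℕ} (p : (Fin n → ℝ) → ℝ) (X : Set (Fin n → ℝ)) : Prop :=
  ∃ f, IsAffineFn f ∧ ∀ x ∈ X, p x = f x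

/-- `X` is a finite family of closed subsets of `ℝⁿ` covering `ℝⁿ` on each of which `p` is
affine (the CPWL definition). -/
def IsCPWLFamily {n I : ℕ} (p : (Fin n → ℝ) → ℝ) (X : Fin I → Set (Fin n → ℝ)) : Prop :=
  (∀ i, IsClosed (X i)) ∧ (⋃ i, X i) = Set.univ ∧ ∀ i, AffineOnSet p (X i)

/-- A family of pieces: closed convex subsets satisfying the CPWL definition. -/
def IsPieceFamily {n I : ℕ} (p : (Fin n → ℝ) → ℝ) (X : Fin I → Set (Fin n → ℝ)) : Prop :=
  IsCPWLFamily p X ∧ ∀ i, Convex ℝ (X i)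

/-- `p` is CPWL with (minimum) number of pieces `q`. -/
def HasPieces {n : ℕ} (p : (Fin n → ℝ) → ℝ) (q : ℕ) : Prop :=
  (∃ X : Fin q → Set (Fin n → ℝ), IsPieceFamily p X) ∧
  ∀ (q' : ℕ) (X : Fin q' → Set (Fin n → ℝ)), IsPieceFamily p X → q ≤ q'

/-- A family of closed subsets satisfying the CPWL definition with minimum cardinality. -/
def IsMinimalClosedFamily {n I : ℕ} (p : (Fin n → ℝ) → ℝ)
    (X : Fin I → Set (Fin n → ℝ)) : Prop :=
  IsCPWLFamily p X ∧
  ∀ (I' : ℕ) (Y : Fin I' → Set (Fin n → ℝ)), IsCPWLFamily p Y → I ≤ I'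

/-- `f` is a linear component of `p`: `f` is affine and agrees with `p` on the union of a
nonempty subfamily of a minimal family of closed subsets satisfying the CPWL definition. -/
def IsLinearComponent {n : ℕ} (p f : (Fin n → ℝ) → ℝ) : Prop :=
  IsAffineFn f ∧
  ∃ (I : ℕ) (X : Fin I → Set (Fin n → ℝ)), IsMinimalClosedFamily p X ∧
    ∃ M : Finset (Fin I), M.Nonempty ∧ ∀ i ∈ M, ∀ x ∈ X i, f x = p x

/-- `p` has exactly `k` distinct linear components. -/
def HasLinearComponents {n : ℕ} (p : (Fin n → ℝ) → ℝ) (k : ℕ) : Prop :=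
  {f | IsLinearComponent p f}.Finite ∧ {f | IsLinearComponent p f}.ncard = k

/-- `φ(n, k) = min (∑_{i=0}^n C((k² − k)/2, i), k!)`. -/
def phi (n k : ℕ) : ℕ :=
  min (∑ i ∈ Finset.range (n + 1), Nat.choose ((k ^ 2 - k) / 2) i) (Nat.factorial k)

/-- A family of closed connected subsets of `ℝⁿ` covering `ℝⁿ` on each of which `p` is affine. -/
def IsConnFamily {n I : ℕ} (p : (Fin n → ℝ) → ℝ) (X : Fin I → Set (Fin n → ℝ)) : Prop :=
  (∀ i, IsClosed (X i)) ∧ (∀ i, IsConnected (X i)) ∧ (⋃ i, X i) = Set.univ ∧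
    ∀ i, AffineOnSet p (X i)

/-- A family of closed connected subsets satisfying the CPWL definition whose cardinality is
minimal among all such families (Assumption 1). -/
def IsMinConnFamily {n I : ℕ} (p : (Fin n → ℝ) → ℝ) (X : Fin I → Set (Fin n → ℝ)) : Prop :=
  IsConnFamily p X ∧
  ∀ (I' : ℕ) (Y : Fin I' → Set (Fin n → ℝ)), IsConnFamily p Y → I ≤ I'

/-- The sequence `r` from the paper: `r 1 = 0`, `r k = 3k/2 + r (k/2)` for even `k`, and
`r k = 2 + 3(k−1)/2 + r ((k+1)/2)` for odd `k ≠ 1`. -/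
def rseq : ℕ → ℕ
  | 0 => 0
  | 1 => 0
  | k + 2 =>
    if (k + 2) % 2 = 0 then 3 * ((k + 2) / 2) + rseq ((k + 2) / 2)
    else 2 + 3 * ((k + 1) / 2) + rseq ((k + 3) / 2)
  decreasing_by all_goals omega

end

/-!
Since `max a b = relu b - relu (-b) + relu (a - b)`, one hidden layer of width `⌈3m/2⌉`
turns `m` affine functions into their `⌈m/2⌉` pairwise maxima, each of which is an affine
function of that layer's output. Recursing on these halves the number of functions per layer,
so after `⌈log₂ m⌉` hidden layers a single affine output remains, and the widths add up to
`r(m)`. Minima follow from `min = -max ∘ neg`.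
-/

open Finset
open scoped Matrix

namespace IsAffineFn

variable {n : ℕ} {f g : (Fin n → ℝ) → ℝ}

lemma const (c : ℝ) : IsAffineFn fun _ : Fin n → ℝ => c :=
  ⟨0, c, fun x => by simp⟩

lemma apply (i : Fin n) : IsAffineFn fun x : Fin n → ℝ => x i :=
  ⟨Pi.single i 1, 0, fun x => by simp [Pi.single_apply, ite_mul]⟩

lemma add (hf : IsAffineFn f) (hg : IsAffineFn g) : IsAffineFn fun x => f x + g x := by
  obtain ⟨a, c, hf⟩ := hf
  obtain ⟨a', c', hg⟩ := hg
  refine ⟨a + a', c + c', fun x => ?_⟩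
  simp only [hf, hg, Pi.add_apply, add_mul, sum_add_distrib]
  ring

lemma const_mul (hf : IsAffineFn f) (r : ℝ) : IsAffineFn fun x => r * f x := by
  obtain ⟨a, c, hf⟩ := hf
  refine ⟨r • a, r * c, fun x => ?_⟩
  simp only [hf, Pi.smul_apply, smul_eq_mul, mul_add, mul_sum, mul_assoc]

lemma neg (hf : IsAffineFn f) : IsAffineFn fun x => -f x := by
  simpa using hf.const_mul (-1)

lemma sub (hf : IsAffineFn f) (hg : IsAffineFn g) : IsAffineFn fun x => f x - g x := by
  simpa only [sub_eq_add_neg] using hf.add hg.neg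

end IsAffineFn

lemma relu_sub_relu_neg (b : ℝ) : relu b - relu (-b) = b := by
  rcases le_total 0 b with h | h <;> simp [relu, h]

lemma relu_sub_relu_neg_add_relu_sub (a b : ℝ) : relu b - relu (-b) + relu (a - b) = max a b := by
  rw [relu_sub_relu_neg, relu]
  rcases le_total a b with h | h <;> simp [h, sub_nonpos.mpr, sub_nonneg.mpr]

lemma Finset.neg_sup'_neg {ι α : Type*} [AddCommGroup α] [LinearOrder α] [IsOrderedAddMonoid α]
    {s : Finset ι} (H : s.Nonempty) (f : ι → α) :
    -(s.sup' H fun i => -f i) = s.inf' H f :=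
  le_antisymm (le_inf' _ _ fun _ hi => neg_le.mpr (le_sup' (fun i => -f i) hi))
    (le_neg.mpr (sup'_le _ _ fun _ hi => neg_le_neg (inf'_le _ hi)))

lemma Nat.Icc_one_succ_eq_insert_map (h : ℕ) :
    Icc 1 (h + 1) = insert 1 ((Icc 1 h).map (addRightEmbedding 1)) := by
  rw [map_add_right_Icc, insert_Icc_add_one_left_eq_Icc (by omega)]

namespace ReLUNet

def affine {n : ℕ} (a : Fin n → ℝ) (c : ℝ) : ReLUNet where
  hidden := 0
  k | 0 => n | _ + 1 => 1
  W | 0 => fun _ => a | _ + 1 => 0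
  b | 0 => fun _ => c | _ + 1 => 0

lemma computesScalar_affine {n : ℕ} (a : Fin n → ℝ) (c : ℝ) :
    (affine a c).ComputesScalar fun x => ∑ i, a i * x i + c :=
  ⟨rfl, rfl, fun _ _ => rfl⟩

lemma exists_computesScalar_of_isAffineFn {n : ℕ} {f : (Fin n → ℝ) → ℝ} (hf : IsAffineFn f) :
    ∃ N : ReLUNet,
      N.depth = 1 ∧ N.numHiddenNeurons = 0 ∧ N.maxWidth = 0 ∧ N.ComputesScalar f := by
  obtain ⟨a, c, hf⟩ := hf
  refine ⟨affine a c, rfl, rfl, rfl, ?_⟩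
  simpa only [← hf] using computesScalar_affine a c

section Cons

def cons (N : ReLUNet) {n : ℕ} (A : Matrix (Fin (N.k 0)) (Fin n) ℝ) (c : Fin (N.k 0) → ℝ) :
    ReLUNet where
  hidden := N.hidden + 1
  k | 0 => n | i + 1 => N.k i
  W | 0 => A | i + 1 => N.W i
  b | 0 => c | i + 1 => N.b i

variable (N : ReLUNet) {n : ℕ} (A : Matrix (Fin (N.k 0)) (Fin n) ℝ) (c : Fin (N.k 0) → ℝ)

lemma layerOut_cons_succ (i : ℕ) (x : Fin n → ℝ) :
    (N.cons A c).layerOut (i + 1) x = N.layerOut i fun t => relu ((A *ᵥ x + c) t) := by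
  induction i with
  | zero => rfl
  | succ i ih => exact congrArg (fun v => N.W (i + 1) *ᵥ (fun j => relu (v j)) + N.b (i + 1)) ih

lemma depth_cons : (N.cons A c).depth = N.depth + 1 := rfl

lemma numHiddenNeurons_cons : (N.cons A c).numHiddenNeurons = N.k 0 + N.numHiddenNeurons := by
  rw [numHiddenNeurons, numHiddenNeurons, cons, Nat.Icc_one_succ_eq_insert_map,
    sum_insert (by simp), sum_map]
  rfl

lemma maxWidth_cons : (N.cons A c).maxWidth = max (N.k 0) N.maxWidth := by
  rw [maxWidth, maxWidth, cons, Nat.Icc_one_succ_eq_insert_map, sup_insert, sup_map]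
  rfl

end Cons

lemma ComputesScalar.exists_cons {N : ReLUNet} {n w : ℕ} {g : (Fin w → ℝ) → ℝ}
    (hN : N.ComputesScalar g) {p : Fin w → (Fin n → ℝ) → ℝ} (hp : ∀ t, IsAffineFn (p t)) :
    ∃ N' : ReLUNet, N'.depth = N.depth + 1 ∧ N'.numHiddenNeurons = w + N.numHiddenNeurons ∧
      N'.maxWidth = max w N.maxWidth ∧ N'.ComputesScalar fun x => g fun t => relu (p t x) := by
  obtain ⟨rfl, h1, hg⟩ := hN
  choose A c hp using hp
  refine ⟨N.cons A c, depth_cons .., numHiddenNeurons_cons .., maxWidth_cons .., rfl, h1,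
    fun x j => ?_⟩
  have hpre : (fun t => relu ((A *ᵥ x + c) t)) = fun t => relu (p t x) := by
    funext t
    simp [hp, Matrix.mulVec, dotProduct]
  refine (congrFun (layerOut_cons_succ N A c N.hidden x) j).trans ?_
  rw [hpre]
  exact hg (fun t => relu (p t x)) j

end ReLUNet

section Pairing

variable {m : ℕ}

def pairFst (j : Fin ((m + 1) / 2)) : Fin m := ⟨2 * j, by omega⟩

def pairSnd (j : Fin ((m + 1) / 2)) : Fin m := ⟨min (2 * j + 1) (m - 1), by omega⟩

lemma exists_pairFst_or_pairSnd_eq (i : Fin m) :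
    ∃ j : Fin ((m + 1) / 2), pairFst j = i ∨ pairSnd j = i := by
  refine ⟨⟨i / 2, by omega⟩, ?_⟩
  rcases Nat.even_or_odd' (i : ℕ) with ⟨k, hk | hk⟩
  · exact Or.inl (Fin.ext (by simp [pairFst]; omega))
  · exact Or.inr (Fin.ext (by simp [pairSnd]; omega))

lemma sup'_max_pairFst_pairSnd {α : Type*} [LinearOrder α] (f : Fin m → α)
    (H : (univ : Finset (Fin m)).Nonempty) (H' : (univ : Finset (Fin ((m + 1) / 2))).Nonempty) :
    univ.sup' H' (fun j => max (f (pairFst j)) (f (pairSnd j))) = univ.sup' H f := by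
  refine le_antisymm (sup'_le _ _ fun j _ => max_le (le_sup' f (mem_univ _))
    (le_sup' f (mem_univ _))) (sup'_le _ _ fun i _ => ?_)
  obtain ⟨j, rfl | rfl⟩ := exists_pairFst_or_pairSnd_eq i
  all_goals
    refine le_trans ?_ (le_sup' (fun j => max (f (pairFst j)) (f (pairSnd j))) (mem_univ j))
  exacts [le_max_left _ _, le_max_right _ _]

/-- Neurons `3j, 3j + 1, 3j + 2` carry `b, -b, a - b` for the `j`-th pair `(a, b)`. Only the
last pair of an odd `m`, where `a = b`, lacks its third neuron; hence the width `⌈3m/2⌉`. -/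
def pairLayer {n : ℕ} (f : Fin m → (Fin n → ℝ) → ℝ) (t : Fin ((3 * m + 1) / 2)) :
    (Fin n → ℝ) → ℝ :=
  let j : Fin ((m + 1) / 2) := ⟨(t : ℕ) / 3, by omega⟩
  if (t : ℕ) % 3 = 0 then f (pairSnd j)
  else if (t : ℕ) % 3 = 1 then fun x => -f (pairSnd j) x
  else fun x => f (pairFst j) x - f (pairSnd j) x

def pairReadout (j : Fin ((m + 1) / 2)) (y : Fin ((3 * m + 1) / 2) → ℝ) : ℝ :=
  y ⟨3 * j, by omega⟩ - y ⟨3 * j + 1, by omega⟩ +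
    if h : 3 * j + 2 < (3 * m + 1) / 2 then y ⟨3 * j + 2, h⟩ else 0

lemma isAffineFn_pairLayer {n : ℕ} {f : Fin m → (Fin n → ℝ) → ℝ} (hf : ∀ i, IsAffineFn (f i))
    (t : Fin ((3 * m + 1) / 2)) : IsAffineFn (pairLayer f t) := by
  unfold pairLayer
  split_ifs
  exacts [hf _, (hf _).neg, (hf _).sub (hf _)]

lemma isAffineFn_pairReadout (j : Fin ((m + 1) / 2)) : IsAffineFn (pairReadout j) := by
  unfold pairReadout
  split_ifs
  · exact ((IsAffineFn.apply _).sub (.apply _)).add (.apply _)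
  · exact ((IsAffineFn.apply _).sub (.apply _)).add (.const 0)

lemma pairReadout_relu_pairLayer {n : ℕ} (f : Fin m → (Fin n → ℝ) → ℝ) (x : Fin n → ℝ)
    (j : Fin ((m + 1) / 2)) :
    pairReadout j (fun t => relu (pairLayer f t x)) =
      max (f (pairFst j) x) (f (pairSnd j) x) := by
  have hdiv : ∀ r < 3, (3 * (j : ℕ) + r) / 3 = j := fun r hr => by omega
  have hmod : ∀ r < 3, (3 * (j : ℕ) + r) % 3 = r := fun r hr => by omega
  simp only [pairReadout, pairLayer, Nat.mul_mod_right, ↓reduceIte, ne_eq, OfNat.ofNat_ne_zero,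
    not_false_eq_true, mul_div_cancel_left₀, Fin.eta, Nat.one_lt_ofNat, hmod, one_ne_zero, hdiv,
    Nat.lt_add_one, OfNat.ofNat_ne_one, dite_eq_ite]
  rw [← relu_sub_relu_neg_add_relu_sub]
  split_ifs with h
  · rfl
  · have : pairFst j = pairSnd j := Fin.ext (by simp only [pairFst, pairSnd]; omega)
    simp [this, relu]

end Pairing

lemma rseq_of_one_lt {m : ℕ} (hm : 1 < m) : rseq m = (3 * m + 1) / 2 + rseq ((m + 1) / 2) := by
  obtain ⟨k, rfl⟩ : ∃ k, m = k + 2 := ⟨m - 2, by omega⟩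
  rw [rseq]
  split_ifs
  · rw [show (k + 2 + 1) / 2 = (k + 2) / 2 by omega]
    omega
  · rw [show (k + 2 + 1) / 2 = (k + 3) / 2 by omega]
    omega

/-- The factor `c` is carried through the induction so that `c = -1` yields minima. -/
theorem exists_reluNet_computesScalar_mul_sup' (c : ℝ) {n m : ℕ} (f : Fin m → (Fin n → ℝ) → ℝ)
    (hf : ∀ i, IsAffineFn (f i)) (H : (univ : Finset (Fin m)).Nonempty) :
    ∃ N : ReLUNet, N.depth = Nat.clog 2 m + 1 ∧ N.numHiddenNeurons = rseq m ∧
      N.maxWidth = (if 1 < m then 1 else 0) * ((3 * m + 1) / 2) ∧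
      N.ComputesScalar fun x => c * univ.sup' H fun i => f i x := by
  induction m using Nat.strong_induction_on generalizing n with
  | _ m ih =>
  have hm₀ : 0 < m := Fin.pos_iff_nonempty.mpr (univ_nonempty_iff.mp H)
  obtain rfl | hm : m = 1 ∨ 1 < m := by omega
  · have hsup (x) : (univ.sup' H fun i => f i x) = f 0 x := by
      rw [← sup'_singleton (f := fun i => f i x)]
      rfl
    simpa [hsup, rseq] using ReLUNet.exists_computesScalar_of_isAffineFn ((hf 0).const_mul c)
  · have H' : (univ : Finset (Fin ((m + 1) / 2))).Nonempty :=
      univ_nonempty_iff.mpr ⟨⟨0, by omega⟩⟩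
    obtain ⟨N, hdepth, hneurons, hwidth, hN⟩ :=
      ih ((m + 1) / 2) (by omega) (pairReadout (m := m)) isAffineFn_pairReadout H'
    obtain ⟨N', hdepth', hneurons', hwidth', hN'⟩ := hN.exists_cons (isAffineFn_pairLayer hf)
    refine ⟨N', ?_, ?_, ?_, ?_⟩
    · rw [hdepth', hdepth, Nat.clog_of_two_le one_lt_two hm]
      rfl
    · rw [hneurons', hneurons, rseq_of_one_lt hm]
    · rw [hwidth', hwidth]
      split_ifs <;> omega
    · have hsup (x : Fin n → ℝ) :
          (univ.sup' H' fun j => max (f (pairFst j) x) (f (pairSnd j) x)) =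
            univ.sup' H fun i => f i x :=
        sup'_max_pairFst_pairSnd (fun i => f i x) H H'
      simpa only [pairReadout_relu_pairLayer, hsup] using hN'

/-- **Lemma (extremum of affine functions).** For any `m ≥ 1` scalar-valued affine functions
`f₁, …, f_m : ℝⁿ → ℝ`, there exists a `(⌈log₂ m⌉ + 1)`-layer ReLU network with `r(m)` hidden
neurons and a maximum width of `𝟙[m > 1]·⌈3m/2⌉` computing `x ↦ max_{i∈[m]} f_i(x)`, and
likewise one computing `x ↦ min_{i∈[m]} f_i(x)`. -/
theorem relu_net_computes_extremum (n m : ℕ) (hm : 0 < m) (f : Fin m → (Fin n → ℝ) → ℝ)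
    (hf : ∀ i, IsAffineFn (f i)) :
    (∃ N : ReLUNet,
        N.depth = Nat.clog 2 m + 1 ∧
        N.numHiddenNeurons = rseq m ∧
        N.maxWidth = (if 1 < m then 1 else 0) * ((3 * m + 1) / 2) ∧
        N.ComputesScalar fun x =>
          Finset.univ.sup' (Finset.univ_nonempty_iff.mpr ⟨⟨0, hm⟩⟩) fun i => f i x) ∧
    (∃ N : ReLUNet,
        N.depth = Nat.clog 2 m + 1 ∧
        N.numHiddenNeurons = rseq m ∧
        N.maxWidth = (if 1 < m then 1 else 0) * ((3 * m + 1) / 2) ∧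
        N.ComputesScalar fun x =>
          Finset.univ.inf' (Finset.univ_nonempty_iff.mpr ⟨⟨0, hm⟩⟩) fun i => f i x) := by
  have H : (univ : Finset (Fin m)).Nonempty := univ_nonempty_iff.mpr ⟨⟨0, hm⟩⟩
  refine ⟨by simpa using exists_reluNet_computesScalar_mul_sup' 1 f hf H, ?_⟩
  simpa [neg_sup'_neg] using
    exists_reluNet_computesScalar_mul_sup' (-1) (fun i x => -f i x) (fun i => (hf i).neg) H
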